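/- arXiv:2206.08717 — 6 statements merged into one kernel-verified Lean document; each statement's English description precedes it below -/
import Mathlib

section
/- Let φ(x) = ∑_{j=0}^∞ x^j/(2j+1)!. For every natural number p and every real x, the p-th derivative of φ satisfies φ^{(p)}(x) = ∑_{j=0}^∞ ((j+p)!/(j!·(2j+2p+1)!)) x^j. Moreover, for every p there is a constant C_p > 0 such that 0 ≤ φ^{(p)}(x) ≤ e^{√x} for all x ≥ 0, and |φ^{(p)}(x)| ≤ C_p for all x ≤ 0. -/
/-!
Differentiating the entire series termwise gives the coefficients `(j+p)!/(j!(2j+2p+1)!)`,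
and `(j+p)!(2j)! ≤ j!(2j+2p+1)!` bounds them by `1/(2j)!`, so for `x ≥ 0` the `p`-th derivative
lies between `0` and `cosh √x ≤ e^{√x}`. For `x = -u² < 0` the chain rule
`φ^{(p+1)}(-u²) = -(2u)⁻¹ d/du φ^{(p)}(-u²)` shows by induction that
`φ^{(p)}(-u²) = P(1/u) sin u + Q(1/u) cos u` for polynomials `P`, `Q`, which is bounded for `u ≥ 1`;
on `[-1, 0]` the derivative is bounded by continuity.
-/

/-- The entire function `φ(x) = ∑_{j=0}^∞ x^j/(2j+1)!`. -/
noncomputable def phi (x : ℝ) : ℝ := ∑' j : ℕ, x ^ j / (Nat.factorial (2 * j + 1) : ℝ)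

open Nat

theorem Nat.factorial_add_mul_factorial_two_mul_le (j p : ℕ) :
    (j + p)! * (2 * j)! ≤ j ! * (2 * j + 2 * p + 1)! :=
  calc (j + p)! * (2 * j)! = (j + p).choose p * p ! * (2 * j)! * j ! := by
        rw [← add_choose_mul_factorial_mul_factorial j p]; ring
    _ ≤ (2 * j + p).choose p * p ! * (2 * j)! * j ! := by
        gcongr (?_ * _ * _ * _); exact choose_le_choose p (by omega)
    _ = j ! * (2 * j + p)! := by rw [← add_choose_mul_factorial_mul_factorial (2 * j) p]; ring
    _ ≤ j ! * (2 * j + 2 * p + 1)! := Nat.mul_le_mul_left _ (factorial_le (by omega))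

theorem hasDerivAt_tsum_mul_pow {a b : ℕ → ℝ} (hab : ∀ n : ℕ, ((n : ℝ) + 1) * a (n + 1) = b n)
    (hb : ∀ r, Summable fun n => ‖b n * r ^ n‖) (x : ℝ) :
    HasDerivAt (fun y => ∑' n, a n * y ^ n) (∑' n, b n * x ^ n) x := by
  set R := |x| + 1
  have hxR : x ∈ Metric.ball (0 : ℝ) R := by simp [R]
  have hbound : ∀ n, ∀ y ∈ Metric.ball (0 : ℝ) R,
      ‖a n * (n * y ^ (n - 1))‖ ≤ ‖b (n - 1) * R ^ (n - 1)‖ := by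
    rintro (_ | m) y hy
    · simp
    · rw [mem_ball_zero_iff] at hy
      rw [Nat.add_sub_cancel, ← hab]
      simp only [norm_mul, norm_pow, Real.norm_of_nonneg (by positivity : 0 ≤ R), Nat.cast_succ]
      rw [mul_left_comm, mul_assoc]
      gcongr
  have hu : Summable fun n => ‖b (n - 1) * R ^ (n - 1)‖ :=
    (summable_nat_add_iff 1).1 (by simpa using hb R)
  have hderiv := hasDerivAt_tsum_of_isPreconnected hu Metric.isOpen_ball
    (convex_ball (0 : ℝ) R).isPreconnected
    (fun n y _ => (hasDerivAt_pow n y).const_mul (a n)) hbound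
    (Metric.mem_ball_self (by positivity))
    (summable_of_ne_finset_zero (s := {0}) (by intro n hn; simp_all)) hxR
  have hshift : ∀ n : ℕ, a (n + 1) * ((n + 1 : ℕ) * x ^ (n + 1 - 1)) = b n * x ^ n := by
    intro n; rw [← hab, Nat.add_sub_cancel]; push_cast; ring
  rwa [tsum_eq_zero_add', CharP.cast_eq_zero, zero_mul, mul_zero, zero_add, tsum_congr hshift]
    at hderiv
  simpa only [hshift] using (hb x).of_norm

noncomputable def phiCoeff (p j : ℕ) : ℝ :=
  ((j + p)! : ℝ) / ((j ! : ℝ) * ((2 * j + 2 * p + 1)! : ℝ))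

noncomputable def phiSeries (p : ℕ) (x : ℝ) : ℝ := ∑' j : ℕ, phiCoeff p j * x ^ j

lemma phiCoeff_pos (p j : ℕ) : 0 < phiCoeff p j := by
  unfold phiCoeff; positivity

lemma phiCoeff_zero (j : ℕ) : phiCoeff 0 j = ((2 * j + 1)! : ℝ)⁻¹ := by
  rw [phiCoeff, add_zero, mul_zero, add_zero, div_mul_cancel_left₀ (by positivity)]

lemma succ_mul_phiCoeff_succ (p j : ℕ) :
    ((j : ℝ) + 1) * phiCoeff p (j + 1) = phiCoeff (p + 1) j := by
  rw [phiCoeff, phiCoeff, show j + 1 + p = j + (p + 1) by ring,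
    show 2 * (j + 1) + 2 * p + 1 = 2 * j + 2 * (p + 1) + 1 by ring, factorial_succ j]
  push_cast
  field_simp

lemma phiCoeff_le_inv_factorial_two_mul (p j : ℕ) : phiCoeff p j ≤ ((2 * j)! : ℝ)⁻¹ := by
  rw [phiCoeff, div_le_iff₀ (by positivity), ← div_eq_inv_mul, le_div_iff₀ (by positivity)]
  exact_mod_cast Nat.factorial_add_mul_factorial_two_mul_le j p

lemma summable_norm_phiCoeff_mul_pow (p : ℕ) (r : ℝ) :
    Summable fun j => ‖phiCoeff p j * r ^ j‖ := by
  refine (Real.summable_pow_div_factorial |r|).of_nonneg_of_le (fun _ => norm_nonneg _) fun j => ?_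
  rw [norm_mul, norm_pow, Real.norm_of_nonneg (phiCoeff_pos p j).le, Real.norm_eq_abs,
    div_eq_inv_mul]
  gcongr
  exact (phiCoeff_le_inv_factorial_two_mul p j).trans
    (inv_anti₀ (by positivity) (mod_cast factorial_le (by omega)))

lemma hasDerivAt_phiSeries (p : ℕ) (x : ℝ) : HasDerivAt (phiSeries p) (phiSeries (p + 1) x) x :=
  hasDerivAt_tsum_mul_pow (succ_mul_phiCoeff_succ p) (summable_norm_phiCoeff_mul_pow (p + 1)) x

lemma iteratedDeriv_phi (p : ℕ) : iteratedDeriv p phi = phiSeries p := by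
  induction p with
  | zero =>
    ext x
    rw [iteratedDeriv_zero]
    exact tsum_congr fun j => by rw [phiCoeff_zero, div_eq_inv_mul]
  | succ p ih =>
    ext x
    rw [iteratedDeriv_succ, ih, (hasDerivAt_phiSeries p x).deriv]

lemma phiSeries_nonneg (p : ℕ) {x : ℝ} (hx : 0 ≤ x) : 0 ≤ phiSeries p x :=
  tsum_nonneg fun j => mul_nonneg (phiCoeff_pos p j).le (pow_nonneg hx j)

lemma phiSeries_le_cosh_sqrt (p : ℕ) {x : ℝ} (hx : 0 ≤ x) :
    phiSeries p x ≤ Real.cosh (Real.sqrt x) := by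
  have hcosh := Real.hasSum_cosh (Real.sqrt x)
  simp only [pow_mul, Real.sq_sqrt hx] at hcosh
  refine hasSum_le (fun j => ?_) ((summable_norm_phiCoeff_mul_pow p x).of_norm.hasSum) hcosh
  rw [div_eq_inv_mul]
  exact mul_le_mul_of_nonneg_right (phiCoeff_le_inv_factorial_two_mul p j) (pow_nonneg hx j)

lemma phiSeries_le_exp_sqrt (p : ℕ) {x : ℝ} (hx : 0 ≤ x) :
    phiSeries p x ≤ Real.exp (Real.sqrt x) := by
  refine (phiSeries_le_cosh_sqrt p hx).trans ?_
  rw [Real.cosh_eq]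
  have := Real.exp_le_exp.2 (neg_le_self (Real.sqrt_nonneg x))
  linarith

open Polynomial in
lemma exists_phiSeries_neg_sq_eq (p : ℕ) : ∃ P Q : ℝ[X], ∀ u : ℝ, 0 < u →
    phiSeries p (-u ^ 2) = P.eval u⁻¹ * Real.sin u + Q.eval u⁻¹ * Real.cos u := by
  induction p with
  | zero =>
    refine ⟨X, 0, fun u hu => ?_⟩
    simp only [eval_X, eval_zero, zero_mul, add_zero, phiSeries, phiCoeff_zero,
      Real.sin_eq_tsum, ← tsum_mul_left]
    refine tsum_congr fun j => ?_
    rw [neg_pow, ← pow_mul, pow_succ]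
    field_simp
  | succ p ih =>
    obtain ⟨P, Q, hPQ⟩ := ih
    refine ⟨C (1 / 2) * (X ^ 3 * derivative P + X * Q), C (1 / 2) * (X ^ 3 * derivative Q - X * P),
      fun u hu => ?_⟩
    have hseries := (hasDerivAt_phiSeries p (-u ^ 2)).comp u ((hasDerivAt_pow 2 u).neg)
    have hinv := hasDerivAt_inv hu.ne'
    have hclosed := (((P.hasDerivAt u⁻¹).comp u hinv).mul (Real.hasDerivAt_sin u)).add
      (((Q.hasDerivAt u⁻¹).comp u hinv).mul (Real.hasDerivAt_cos u))
    have heq : (fun v => phiSeries p (-v ^ 2)) =ᶠ[nhds u]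
        fun v => P.eval v⁻¹ * Real.sin v + Q.eval v⁻¹ * Real.cos v :=
      (lt_mem_nhds hu).mono hPQ
    have hderiv_eq := (hseries.congr_of_eventuallyEq heq.symm).unique hclosed
    simp only [Function.comp_apply, Nat.add_one_sub_one, pow_one, Nat.cast_ofNat, eval_mul,
      eval_add, eval_sub, eval_C, eval_X, eval_pow] at hderiv_eq ⊢
    field_simp at hderiv_eq ⊢
    linear_combination -hderiv_eq

open Polynomial in
lemma Polynomial.exists_abs_eval_inv_mul_sin_add_eval_inv_mul_cos_le (P Q : ℝ[X]) :
    ∃ C, ∀ u : ℝ, 1 ≤ u → |P.eval u⁻¹ * Real.sin u + Q.eval u⁻¹ * Real.cos u| ≤ C := by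
  obtain ⟨CP, hCP⟩ := isCompact_Icc.exists_bound_of_continuousOn
    (s := Set.Icc (0 : ℝ) 1) P.continuous.continuousOn
  obtain ⟨CQ, hCQ⟩ := isCompact_Icc.exists_bound_of_continuousOn
    (s := Set.Icc (0 : ℝ) 1) Q.continuous.continuousOn
  refine ⟨CP + CQ, fun u hu => ?_⟩
  have hw : u⁻¹ ∈ Set.Icc (0 : ℝ) 1 := ⟨by positivity, inv_le_one_of_one_le₀ hu⟩
  calc |P.eval u⁻¹ * Real.sin u + Q.eval u⁻¹ * Real.cos u|
      ≤ |P.eval u⁻¹| * |Real.sin u| + |Q.eval u⁻¹| * |Real.cos u| := by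
        rw [← abs_mul, ← abs_mul]; exact abs_add_le _ _
    _ ≤ |P.eval u⁻¹| + |Q.eval u⁻¹| :=
        add_le_add (mul_le_of_le_one_right (abs_nonneg _) (Real.abs_sin_le_one u))
          (mul_le_of_le_one_right (abs_nonneg _) (Real.abs_cos_le_one u))
    _ ≤ CP + CQ := add_le_add (hCP _ hw) (hCQ _ hw)

lemma exists_abs_phiSeries_le_of_nonpos (p : ℕ) : ∃ C, ∀ x : ℝ, x ≤ 0 → |phiSeries p x| ≤ C := by
  have hcont : Continuous (phiSeries p) :=
    continuous_iff_continuousAt.2 fun x => (hasDerivAt_phiSeries p x).continuousAt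
  obtain ⟨C₀, hC₀⟩ := isCompact_Icc.exists_bound_of_continuousOn
    (s := Set.Icc (-1 : ℝ) 0) hcont.continuousOn
  obtain ⟨P, Q, hPQ⟩ := exists_phiSeries_neg_sq_eq p
  obtain ⟨C₁, hC₁⟩ := P.exists_abs_eval_inv_mul_sin_add_eval_inv_mul_cos_le Q
  refine ⟨max C₀ C₁, fun x hx => ?_⟩
  rcases le_or_gt (-1) x with hx₁ | hx₁
  · exact (hC₀ x ⟨hx₁, hx⟩).trans (le_max_left _ _)
  · have hu : 1 ≤ Real.sqrt (-x) := Real.one_le_sqrt.2 (by linarith)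
    have hx_eq : x = -Real.sqrt (-x) ^ 2 := by rw [Real.sq_sqrt (by linarith), neg_neg]
    rw [hx_eq, hPQ _ (by linarith)]
    exact (hC₁ _ hu).trans (le_max_right _ _)

/-- For every `p`, the `p`-th derivative of `φ` is given by the power series
`φ^{(p)}(x) = ∑_{j=0}^∞ ((j+p)!/(j!·(2j+2p+1)!)) x^j`, and it satisfies
`0 ≤ φ^{(p)}(x) ≤ e^{√x}` for `x ≥ 0` and `|φ^{(p)}(x)| ≤ C_p` for `x ≤ 0`. -/
theorem phi_iteratedDeriv_series_and_bounds (p : ℕ) :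
    (∀ x : ℝ, iteratedDeriv p phi x =
      ∑' j : ℕ, ((Nat.factorial (j + p) : ℝ) /
        ((Nat.factorial j : ℝ) * (Nat.factorial (2 * j + 2 * p + 1) : ℝ))) * x ^ j) ∧
    ∃ C : ℝ, 0 < C ∧
      (∀ x : ℝ, 0 ≤ x →
        0 ≤ iteratedDeriv p phi x ∧ iteratedDeriv p phi x ≤ Real.exp (Real.sqrt x)) ∧
      (∀ x : ℝ, x ≤ 0 → |iteratedDeriv p phi x| ≤ C) := by
  rw [iteratedDeriv_phi]
  obtain ⟨C, hC⟩ := exists_abs_phiSeries_le_of_nonpos p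
  refine ⟨fun x => rfl, max C 1, by positivity,
    fun x hx => ⟨phiSeries_nonneg p hx, phiSeries_le_exp_sqrt p hx⟩,
    fun x hx => (hC x hx).trans (le_max_left _ _)⟩
end

section
/- There exists θ₀ ∈ (0,1) such that for every θ ∈ (0,θ₀], every ε > 0, every t ≥ 0 and every r > 0 with 1−θ ≤ 2εr ≤ 1, one has exp(−(1−θ)·t/(2ε²)) · sinh( t·√(1−4ε²r²)/(2ε²) ) ≤ exp(−θ·t·r²). -/
/-!
Write `x = 2εr ∈ [1 - θ, 1]`. Bounding `sinh` by `exp`, the left side is at most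
`exp (t (√(1 - x²) - (1 - θ)) / (2ε²))`, so it suffices that
`√(1 - x²) ≤ 1 - θ (1 + x² / 2)`, which is `(1 - θ) - 2ε²θr²`. For `θ ≤ 1/8` this holds
because `1 - x² ≤ 2θ` makes the left side at most `1/2`, while the right side is at least `13/16`.
-/

namespace Real

lemma sinh_le_exp (x : ℝ) : sinh x ≤ exp x := by
  rw [sinh_eq]
  linarith [exp_pos x, exp_pos (-x)]

lemma exp_mul_sinh_le_exp {a c d s t : ℝ} (ha : 0 < a) (ht : 0 ≤ t) (hs : s ≤ c - a * d) :
    exp (-c * t / a) * sinh (t * s / a) ≤ exp (-(d * t)) := by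
  have hexponent : -c * t / a + t * s / a ≤ -(d * t) := by
    rw [← add_div, div_le_iff₀ ha]
    nlinarith [mul_le_mul_of_nonneg_left hs ht]
  calc exp (-c * t / a) * sinh (t * s / a)
      ≤ exp (-c * t / a) * exp (t * s / a) := by gcongr; exact sinh_le_exp _
    _ = exp (-c * t / a + t * s / a) := (exp_add _ _).symm
    _ ≤ exp (-(d * t)) := exp_le_exp.mpr hexponent

lemma sqrt_one_sub_sq_le {θ x : ℝ} (hθ : 0 ≤ θ) (hθ' : θ ≤ 1 / 8) (hx : 1 - θ ≤ x)
    (hx' : x ≤ 1) : √(1 - x ^ 2) ≤ 1 - θ * (1 + x ^ 2 / 2) := by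
  calc √(1 - x ^ 2) ≤ 1 / 2 := sqrt_le_iff.mpr ⟨by norm_num, by nlinarith⟩
    _ ≤ 1 - θ * (1 + x ^ 2 / 2) := by nlinarith

end Real

/-- There is `θ₀ ∈ (0,1)` such that for all `θ ∈ (0,θ₀]`, `ε > 0`, `t ≥ 0` and `r > 0` with
`1−θ ≤ 2εr ≤ 1`, one has `e^{−(1−θ)t/(2ε²)} · sinh(t√(1−4ε²r²)/(2ε²)) ≤ e^{−θtr²}`. -/
theorem dampedWave_threshold_window_bound :
    ∃ θ₀ : ℝ, θ₀ ∈ Set.Ioo (0:ℝ) 1 ∧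
      ∀ θ ∈ Set.Ioc (0:ℝ) θ₀, ∀ ε t r : ℝ, 0 < ε → 0 ≤ t → 0 < r →
        1 - θ ≤ 2 * ε * r → 2 * ε * r ≤ 1 →
        Real.exp (-(1 - θ) * t / (2 * ε ^ 2)) *
          Real.sinh (t * Real.sqrt (1 - 4 * ε ^ 2 * r ^ 2) / (2 * ε ^ 2))
          ≤ Real.exp (-θ * t * r ^ 2) := by
  refine ⟨1 / 8, ⟨by norm_num, by norm_num⟩, ?_⟩
  rintro θ ⟨hθ, hθ'⟩ ε t r hε ht - hx hx'
  have hsqrt : √(1 - 4 * ε ^ 2 * r ^ 2) ≤ (1 - θ) - 2 * ε ^ 2 * (θ * r ^ 2) := by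
    rw [show 4 * ε ^ 2 * r ^ 2 = (2 * ε * r) ^ 2 by ring]
    exact (Real.sqrt_one_sub_sq_le hθ.le hθ' hx hx').trans_eq (by ring)
  convert Real.exp_mul_sinh_le_exp (by positivity) ht hsqrt using 2
  ring
end

section
/- There exists θ₀ ∈ (0,1) such that for every θ ∈ (0,θ₀] there is a constant C > 0 with the following property: for all ε > 0, t ≥ 0 and r ≥ 1, (a) if r ≤ (1+θ)/(2ε) then ε^{−2}|D_ε(r,t)| ≤ C·e^{−θ·t·r²}, and (b) if r > (1+θ)/(2ε) then ε^{−2}|D_ε(r,t)| ≤ C·e^{−t/(2ε²)}·ε^{−1}·r^{−1}. -/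
/-- The damped-wave Fourier symbol `D_ε(r,t) = e^{−t/(2ε²)}·t·φ(t²(1/(4ε⁴) − r²/ε²))`. -/
noncomputable def D (ε r t : ℝ) : ℝ :=
  Real.exp (-t / (2 * ε ^ 2)) * t * phi (t ^ 2 * (1 / (4 * ε ^ 4) - r ^ 2 / ε ^ 2))

/-!
Write `m = 1/(2ε²)` and `a = 1/(4ε⁴) - r²/ε² = m² - 2mr²`, so that `D = e^{-tm} · t φ(t²a)`,
where `t φ(t²a) = sinh(t√a)/√a` for `a ≥ 0` and `t φ(t²a) = t sinc(t√(-a))` for `a ≤ 0`.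
Since `(m - r²)² = a + r⁴`, we have `√a ≤ m - r²`: the damping beats the hyperbolic growth,
`e^{-tm} e^{t√a} ≤ e^{-tr²}`. Below the threshold `2εr ≤ 1 + θ` this gives `|D| ≤ t e^{-tr²}`,
which is `≲ ε² e^{-θtr²}` once `εr` is bounded below, and `|D| ≤ e^{-tr²}/(2√a) ≤ 2ε² e^{-tr²}`
when `√a ≥ m/2`. Above the threshold, `|sin| ≤ 1` gives
`|D| ≤ e^{-tm}/√(-a) = 2ε² e^{-tm}/√(4ε²r² - 1)`, and `2εr/√(4ε²r² - 1) ≤ (1+θ)/√((1+θ)² - 1)`.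
-/

open Real

lemma phi_zero : phi 0 = 1 := by
  rw [phi, tsum_eq_single 0 fun j hj ↦ by simp [zero_pow hj]]
  simp

lemma phi_nonneg {x : ℝ} (hx : 0 ≤ x) : 0 ≤ phi x :=
  tsum_nonneg fun _ ↦ by positivity

lemma phi_sq_mul_self (s : ℝ) : phi (s ^ 2) * s = sinh s := by
  rw [phi, ← tsum_mul_right, sinh_eq_tsum]
  congr 1 with j
  rw [div_mul_eq_mul_div, ← pow_mul, ← pow_succ]

lemma phi_neg_sq_mul_self (s : ℝ) : phi (-s ^ 2) * s = sin s := by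
  rw [phi, ← tsum_mul_right, sin_eq_tsum]
  congr 1 with j
  rw [div_mul_eq_mul_div, neg_pow, ← pow_mul, mul_assoc, ← pow_succ]

lemma phi_neg_sq (s : ℝ) : phi (-s ^ 2) = sinc s := by
  rcases eq_or_ne s 0 with rfl | hs
  · simp [phi_zero]
  · rw [sinc_of_ne_zero hs, eq_div_iff hs, phi_neg_sq_mul_self]

lemma phi_mul_sqrt {x : ℝ} (hx : 0 ≤ x) : phi x * √x = sinh √x := by
  simpa only [sq_sqrt hx] using phi_sq_mul_self √x

lemma abs_phi_le_one {x : ℝ} (hx : x ≤ 0) : |phi x| ≤ 1 := by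
  have hx' : x = -√(-x) ^ 2 := by rw [sq_sqrt (neg_nonneg.mpr hx), neg_neg]
  rw [hx', phi_neg_sq]
  exact abs_sinc_le_one _

lemma abs_phi_mul_sqrt_neg_le_one {x : ℝ} (hx : x ≤ 0) : |phi x| * √(-x) ≤ 1 := by
  have h := phi_neg_sq_mul_self √(-x)
  rw [sq_sqrt (neg_nonneg.mpr hx), neg_neg] at h
  rw [← abs_of_nonneg (sqrt_nonneg (-x)), ← abs_mul, h]
  exact abs_sin_le_one _

lemma sinh_le_mul_exp (u : ℝ) : sinh u ≤ u * exp u := by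
  have h : exp u * (1 - 2 * u) ≤ exp (-u) := by
    rw [show -u = u + -2 * u by ring, exp_add]
    gcongr
    linarith [add_one_le_exp (-2 * u)]
  rw [sinh_eq]
  linarith

lemma sinh_le_exp_div_two (u : ℝ) : sinh u ≤ exp u / 2 := by
  rw [sinh_eq]; linarith [exp_pos (-u)]

lemma mul_exp_neg_le {θ x : ℝ} (hθ : θ ≤ 1 / 2) (hx : 0 ≤ x) : x * exp (-x) ≤ 2 * exp (-θ * x) := by
  have h : x / 2 * exp (-(x / 2)) ≤ 1 := by
    rw [exp_neg, ← div_eq_mul_inv, div_le_one (exp_pos _)]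
    linarith [add_one_le_exp (x / 2)]
  have hsplit : exp (-x) = exp (-(x / 2)) * exp (-(x / 2)) := by rw [← exp_add]; ring_nf
  calc x * exp (-x) = 2 * (x / 2 * exp (-(x / 2))) * exp (-(x / 2)) := by rw [hsplit]; ring
    _ ≤ 2 * 1 * exp (-(x / 2)) := by gcongr
    _ ≤ 2 * exp (-θ * x) := by rw [mul_one]; gcongr; nlinarith

lemma div_sqrt_sq_sub_one_le {x y : ℝ} (hy : 1 < y) (hyx : y ≤ x) :
    x / √(x ^ 2 - 1) ≤ y / √(y ^ 2 - 1) := by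
  rw [div_le_div_iff₀ (sqrt_pos.mpr (by nlinarith)) (sqrt_pos.mpr (by nlinarith)),
    ← sqrt_sq (by linarith : 0 ≤ x), ← sqrt_sq (by linarith : 0 ≤ y), ← sqrt_mul (sq_nonneg _),
    ← sqrt_mul (sq_nonneg _), sqrt_sq (by linarith), sqrt_sq (by linarith)]
  exact sqrt_le_sqrt (by nlinarith)

lemma phi_le_exp_sqrt {x : ℝ} (hx : 0 ≤ x) : phi x ≤ exp √x := by
  rcases (sqrt_nonneg x).eq_or_lt with hs | hs
  · rw [← hs, exp_zero, (sqrt_eq_zero hx).mp hs.symm, phi_zero]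
  · rw [← mul_le_mul_iff_left₀ hs, phi_mul_sqrt hx, mul_comm]
    exact sinh_le_mul_exp _

lemma phi_mul_sqrt_le {x : ℝ} (hx : 0 ≤ x) : phi x * √x ≤ exp √x / 2 :=
  phi_mul_sqrt hx ▸ sinh_le_exp_div_two _

lemma sqrt_sq_mul {t a : ℝ} (ht : 0 ≤ t) : √(t ^ 2 * a) = t * √a := by
  rw [sqrt_mul (sq_nonneg t), sqrt_sq ht]

lemma abs_mul_phi_le_inv_sqrt {a : ℝ} (ha : a < 0) (t : ℝ) : |t * phi (t ^ 2 * a)| ≤ (√(-a))⁻¹ := by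
  have h := abs_phi_mul_sqrt_neg_le_one (mul_nonpos_of_nonneg_of_nonpos (sq_nonneg t) ha.le)
  rw [← mul_neg, sqrt_mul (sq_nonneg t), sqrt_sq_eq_abs] at h
  rw [← one_div, le_div_iff₀ (sqrt_pos.mpr (neg_pos.mpr ha)), abs_mul]
  calc |t| * |phi (t ^ 2 * a)| * √(-a) = |phi (t ^ 2 * a)| * (|t| * √(-a)) := by ring
    _ ≤ 1 := h

section Kernel

variable {a b m t : ℝ}

lemma exp_mul_abs_mul_phi_le (ht : 0 ≤ t) (hbm : b ≤ m) (ha : a ≤ (m - b) ^ 2) :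
    exp (-t * m) * |t * phi (t ^ 2 * a)| ≤ t * exp (-t * b) := by
  rcases le_total a 0 with ha0 | ha0
  · have hphi : |t * phi (t ^ 2 * a)| ≤ t := by
      rw [abs_mul, abs_of_nonneg ht]
      exact mul_le_of_le_one_right ht
        (abs_phi_le_one (mul_nonpos_of_nonneg_of_nonpos (sq_nonneg t) ha0))
    have hexp : exp (-t * m) ≤ exp (-t * b) := exp_le_exp.mpr (by nlinarith)
    rw [mul_comm t (exp _)]
    exact mul_le_mul hexp hphi (abs_nonneg _) (exp_pos _).le
  · have hsqrt : √a ≤ m - b := (sqrt_le_left (sub_nonneg.mpr hbm)).mpr ha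
    have hphi : |t * phi (t ^ 2 * a)| ≤ t * exp (t * √a) := by
      rw [abs_of_nonneg (mul_nonneg ht (phi_nonneg (by positivity))), ← sqrt_sq_mul ht]
      exact mul_le_mul_of_nonneg_left (phi_le_exp_sqrt (by positivity)) ht
    calc exp (-t * m) * |t * phi (t ^ 2 * a)| ≤ exp (-t * m) * (t * exp (t * √a)) := by gcongr
      _ = t * exp (-t * m + t * √a) := by rw [exp_add]; ring
      _ ≤ t * exp (-t * b) := by gcongr; nlinarith

lemma exp_mul_abs_mul_phi_le_div (ht : 0 ≤ t) (hbm : b ≤ m) (ha : a ≤ (m - b) ^ 2) (hm : 0 < m)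
    (hma : m ^ 2 ≤ 4 * a) : exp (-t * m) * |t * phi (t ^ 2 * a)| ≤ exp (-t * b) / m := by
  have ha0 : 0 < a := by nlinarith
  have hsqrt : √a ≤ m - b := (sqrt_le_left (sub_nonneg.mpr hbm)).mpr ha
  have hm2 : m ≤ 2 * √a := by
    have : m / 2 ≤ √a := le_sqrt_of_sq_le (by nlinarith)
    linarith
  have hphi : |t * phi (t ^ 2 * a)| * √a ≤ exp (t * √a) / 2 := by
    calc |t * phi (t ^ 2 * a)| * √a = phi (t ^ 2 * a) * √(t ^ 2 * a) := by
          rw [abs_of_nonneg (mul_nonneg ht (phi_nonneg (by positivity))), sqrt_sq_mul ht]; ring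
      _ ≤ exp √(t ^ 2 * a) / 2 := phi_mul_sqrt_le (by positivity)
      _ = exp (t * √a) / 2 := by rw [sqrt_sq_mul ht]
  have hphi' : |t * phi (t ^ 2 * a)| ≤ exp (t * √a) / m := by
    rw [le_div_iff₀ hm]
    nlinarith [abs_nonneg (t * phi (t ^ 2 * a)), exp_pos (t * √a)]
  calc exp (-t * m) * |t * phi (t ^ 2 * a)| ≤ exp (-t * m) * (exp (t * √a) / m) := by gcongr
    _ = exp (-t * m + t * √a) / m := by rw [exp_add]; ring
    _ ≤ exp (-t * b) / m := by gcongr; nlinarith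

end Kernel

lemma abs_D_eq (ε r t : ℝ) : |D ε r t| =
    exp (-t * (2 * ε ^ 2)⁻¹) * |t * phi (t ^ 2 * (1 / (4 * ε ^ 4) - r ^ 2 / ε ^ 2))| := by
  rw [D, mul_assoc, abs_mul, abs_of_pos (exp_pos _), div_eq_mul_inv]

section Symbol

variable {ε r t : ℝ}

lemma symbol_arg_le_sq (hε : ε ≠ 0) :
    1 / (4 * ε ^ 4) - r ^ 2 / ε ^ 2 ≤ ((2 * ε ^ 2)⁻¹ - r ^ 2) ^ 2 := by
  have h : ((2 * ε ^ 2)⁻¹ - r ^ 2) ^ 2 - (1 / (4 * ε ^ 4) - r ^ 2 / ε ^ 2) = r ^ 4 := by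
    field_simp; ring
  linarith [show 0 ≤ r ^ 4 by positivity]

lemma abs_D_le_mul_exp (hε : ε ≠ 0) (ht : 0 ≤ t) (h : 2 * ε ^ 2 * r ^ 2 ≤ 1) :
    |D ε r t| ≤ t * exp (-t * r ^ 2) := by
  rw [abs_D_eq]
  refine exp_mul_abs_mul_phi_le ht ?_ (symbol_arg_le_sq hε)
  rw [← one_div, le_div_iff₀ (by positivity)]
  linarith

lemma abs_D_le_two_mul_sq_mul_exp (hε : ε ≠ 0) (ht : 0 ≤ t) (h : 16 * ε ^ 2 * r ^ 2 ≤ 3) :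
    |D ε r t| ≤ 2 * ε ^ 2 * exp (-t * r ^ 2) := by
  have hbm : r ^ 2 ≤ (2 * ε ^ 2)⁻¹ := by
    rw [← one_div, le_div_iff₀ (by positivity)]
    linarith
  have hma : ((2 * ε ^ 2)⁻¹) ^ 2 ≤ 4 * (1 / (4 * ε ^ 4) - r ^ 2 / ε ^ 2) := by
    have h4 : 4 * (1 / (4 * ε ^ 4) - r ^ 2 / ε ^ 2) - ((2 * ε ^ 2)⁻¹) ^ 2
        = (3 - 16 * ε ^ 2 * r ^ 2) / (4 * ε ^ 4) := by
      field_simp; ring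
    linarith [div_nonneg (sub_nonneg.mpr h) (by positivity : (0 : ℝ) ≤ 4 * ε ^ 4)]
  have h := exp_mul_abs_mul_phi_le_div ht hbm (symbol_arg_le_sq hε) (by positivity) hma
  rw [abs_D_eq, mul_comm (2 * ε ^ 2)]
  rwa [div_inv_eq_mul] at h

lemma abs_D_le_of_one_lt (hε : ε ≠ 0) (h : 1 < (2 * ε * r) ^ 2) :
    |D ε r t| ≤ exp (-t / (2 * ε ^ 2)) * (2 * ε ^ 2 / √((2 * ε * r) ^ 2 - 1)) := by
  have hneg : -(1 / (4 * ε ^ 4) - r ^ 2 / ε ^ 2) = ((2 * ε * r) ^ 2 - 1) / (2 * ε ^ 2) ^ 2 := by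
    field_simp; ring
  have ha : 1 / (4 * ε ^ 4) - r ^ 2 / ε ^ 2 < 0 := by
    rw [← neg_pos, hneg]
    exact div_pos (by linarith) (by positivity)
  rw [abs_D_eq, ← div_eq_mul_inv]
  gcongr
  refine (abs_mul_phi_le_inv_sqrt ha t).trans_eq ?_
  rw [hneg, sqrt_div' _ (by positivity), sqrt_sq (by positivity), inv_div]

lemma abs_D_div_sq_le {θ : ℝ} (hθ : θ ≤ 1 / 2) (hε : ε ≠ 0) (ht : 0 ≤ t)
    (h : 2 * ε ^ 2 * r ^ 2 ≤ 1) : |D ε r t| / ε ^ 2 ≤ 11 * exp (-θ * t * r ^ 2) := by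
  have hε2 : 0 < ε ^ 2 := by positivity
  have hexp : exp (-t * r ^ 2) ≤ exp (-θ * t * r ^ 2) :=
    exp_le_exp.mpr (by nlinarith [mul_nonneg ht (sq_nonneg r)])
  rw [div_le_iff₀ hε2]
  by_cases hsmall : 16 * ε ^ 2 * r ^ 2 ≤ 3
  · calc |D ε r t| ≤ 2 * ε ^ 2 * exp (-t * r ^ 2) := abs_D_le_two_mul_sq_mul_exp hε ht hsmall
      _ ≤ 11 * exp (-θ * t * r ^ 2) * ε ^ 2 := by nlinarith [exp_pos (-t * r ^ 2)]
  · have hr : 0 < r ^ 2 := by nlinarith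
    calc |D ε r t| ≤ t * exp (-t * r ^ 2) := abs_D_le_mul_exp hε ht h
      _ = t * r ^ 2 * exp (-(t * r ^ 2)) / r ^ 2 := by
        rw [neg_mul, mul_right_comm, mul_div_cancel_right₀ _ hr.ne']
      _ ≤ 2 * exp (-θ * (t * r ^ 2)) / r ^ 2 := by
        gcongr ?_ / _; exact mul_exp_neg_le hθ (mul_nonneg ht (sq_nonneg r))
      _ ≤ 11 * exp (-θ * t * r ^ 2) * ε ^ 2 := by
        rw [div_le_iff₀ hr, ← mul_assoc]
        nlinarith [exp_pos (-θ * t * r ^ 2)]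

end Symbol

/-- There is `θ₀ ∈ (0,1)` such that for every `θ ∈ (0,θ₀]` there is `C > 0` with:
for all `ε > 0`, `t ≥ 0`, `r ≥ 1`,
(a) if `r ≤ (1+θ)/(2ε)` then `ε^{−2}|D_ε(r,t)| ≤ C e^{−θtr²}`, and
(b) if `r > (1+θ)/(2ε)` then `ε^{−2}|D_ε(r,t)| ≤ C e^{−t/(2ε²)} ε^{−1} r^{−1}`. -/
theorem dampedWave_symbol_bounds :
    ∃ θ₀ : ℝ, θ₀ ∈ Set.Ioo (0:ℝ) 1 ∧
      ∀ θ ∈ Set.Ioc (0:ℝ) θ₀, ∃ C : ℝ, 0 < C ∧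
        ∀ ε t r : ℝ, 0 < ε → 0 ≤ t → 1 ≤ r →
          (r ≤ (1 + θ) / (2 * ε) →
            |D ε r t| / ε ^ 2 ≤ C * Real.exp (-θ * t * r ^ 2)) ∧
          ((1 + θ) / (2 * ε) < r →
            |D ε r t| / ε ^ 2 ≤ C * Real.exp (-t / (2 * ε ^ 2)) / (ε * r)) := by
  refine ⟨1 / 4, ⟨by norm_num, by norm_num⟩, fun θ ⟨hθ0, hθ⟩ ↦ ?_⟩
  set C := (1 + θ) / √((1 + θ) ^ 2 - 1)
  refine ⟨max 11 C, by positivity, fun ε t r hε ht _ ↦ ⟨fun hle ↦ ?_, fun hlt ↦ ?_⟩⟩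
  · have h : 2 * ε ^ 2 * r ^ 2 ≤ 1 := by
      rw [le_div_iff₀ (by positivity)] at hle
      nlinarith [pow_le_pow_left₀ (by positivity) hle 2]
    calc |D ε r t| / ε ^ 2 ≤ 11 * exp (-θ * t * r ^ 2) := abs_D_div_sq_le (by linarith) hε.ne' ht h
      _ ≤ max 11 C * exp (-θ * t * r ^ 2) := by gcongr; exact le_max_left _ _
  · have hεr : 1 + θ < 2 * ε * r := by rwa [div_lt_iff₀ (by positivity), mul_comm] at hlt
    have hεr0 : 0 < ε * r := by nlinarith
    calc |D ε r t| / ε ^ 2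
        ≤ exp (-t / (2 * ε ^ 2)) * (2 * ε ^ 2 / √((2 * ε * r) ^ 2 - 1)) / ε ^ 2 := by
          gcongr; exact abs_D_le_of_one_lt hε.ne' (by nlinarith)
      _ = exp (-t / (2 * ε ^ 2)) * (2 * ε * r / √((2 * ε * r) ^ 2 - 1)) / (ε * r) := by
          field_simp
      _ ≤ exp (-t / (2 * ε ^ 2)) * C / (ε * r) := by
          gcongr; exact div_sqrt_sq_sub_one_le (by linarith) hεr.le
      _ ≤ max 11 C * exp (-t / (2 * ε ^ 2)) / (ε * r) := by
          rw [mul_comm]; gcongr; exact le_max_right _ _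
end

section
/- For every θ ∈ (0,1/2] there is a constant C > 0 such that for all ε ∈ (0,1], all t ≥ 0 and all r ≥ 1 with 2εr ≤ ε^θ, one has |ε^{−2}·D_ε(r,t) − e^{−t r²}| ≤ C·( e^{−t/(2ε²)} + ε^{2θ}·e^{−t r²/2} ). -/
open Real

theorem mul_phi_sq (y : ℝ) : y * phi (y ^ 2) = sinh y := by
  rw [phi, ← tsum_mul_left, sinh_eq_tsum]
  congr 1 with j
  rw [← pow_mul, pow_succ]
  ring

theorem D_eq_exp_mul_sinh_div {ε r t l : ℝ} (hl : l ≠ 0)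
    (hl2 : l ^ 2 = 1 / (4 * ε ^ 4) - r ^ 2 / ε ^ 2) :
    D ε r t = exp (-t / (2 * ε ^ 2)) * sinh (l * t) / l := by
  have harg : t ^ 2 * (1 / (4 * ε ^ 4) - r ^ 2 / ε ^ 2) = (l * t) ^ 2 := by rw [← hl2]; ring
  rw [D, harg, ← mul_phi_sq, mul_assoc]
  field_simp

theorem D_div_sq_eq {ε r t q : ℝ} (hε : ε ≠ 0) (hq : 0 < q)
    (hq2 : q ^ 2 = 1 - (2 * ε * r) ^ 2) :
    D ε r t / ε ^ 2 =
      (exp (-t * ((1 - q) / (2 * ε ^ 2))) - exp (-t * ((1 + q) / (2 * ε ^ 2)))) / q := by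
  have hl2 : (q / (2 * ε ^ 2)) ^ 2 = 1 / (4 * ε ^ 4) - r ^ 2 / ε ^ 2 := by
    field_simp
    linear_combination 4 * hq2
  have hslow : exp (-t / (2 * ε ^ 2)) * exp (q / (2 * ε ^ 2) * t)
      = exp (-t * ((1 - q) / (2 * ε ^ 2))) := by
    rw [← exp_add]; ring_nf
  have hfast : exp (-t / (2 * ε ^ 2)) * exp (-(q / (2 * ε ^ 2) * t))
      = exp (-t * ((1 + q) / (2 * ε ^ 2))) := by
    rw [← exp_add]; ring_nf
  rw [D_eq_exp_mul_sinh_div (by positivity) hl2, sinh_eq, ← hslow, ← hfast]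
  field_simp

theorem slow_decay_rate_bounds {ε r q : ℝ} (hε : ε ≠ 0) (hq : 0 ≤ q)
    (hq2 : q ^ 2 = 1 - (2 * ε * r) ^ 2) :
    1 - q ≤ (2 * ε * r) ^ 2 ∧ r ^ 2 ≤ (1 - q) / (2 * ε ^ 2) ∧
      (1 - q) / (2 * ε ^ 2) ≤ r ^ 2 + (2 * ε * r) ^ 2 * r ^ 2 := by
  have hq1 : q ≤ 1 := by nlinarith
  have hgap : 1 - q ≤ (2 * ε * r) ^ 2 := by nlinarith
  -- `1 - q = s / 2 + (1 - q) ^ 2 / 2` with `s = (2εr)²`, and `0 ≤ 1 - q ≤ s`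
  have hsplit : (1 - q) / (2 * ε ^ 2) = r ^ 2 + (1 - q) ^ 2 / (4 * ε ^ 2) := by
    field_simp
    linear_combination -2 * hq2
  refine ⟨hgap, ?_, ?_⟩ <;> rw [hsplit]
  · have : 0 ≤ (1 - q) ^ 2 / (4 * ε ^ 2) := by positivity
    linarith
  · have hsq : (1 - q) ^ 2 ≤ ((2 * ε * r) ^ 2) ^ 2 := pow_le_pow_left₀ (by linarith) hgap 2
    have : (1 - q) ^ 2 / (4 * ε ^ 2) ≤ (2 * ε * r) ^ 2 * r ^ 2 := by
      rw [div_le_iff₀ (by positivity)]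
      linear_combination hsq
    linarith

theorem mul_exp_neg_le_exp_neg_half (x : ℝ) : x * exp (-x) ≤ exp (-x / 2) := by
  have hpeak : x / 2 * exp (-(x / 2)) ≤ (exp 1)⁻¹ := exp_neg 1 ▸ mul_exp_neg_le_exp_neg_one _
  have he : 2 ≤ exp 1 := by linarith [add_one_le_exp 1]
  have hsplit : x * exp (-x) = 2 * (x / 2 * exp (-(x / 2))) * exp (-x / 2) := by
    rw [mul_assoc, mul_assoc, ← exp_add]; ring_nf
  rw [hsplit]
  refine mul_le_of_le_one_left (exp_nonneg _) ?_
  calc 2 * (x / 2 * exp (-(x / 2))) ≤ 2 * (exp 1)⁻¹ := by gcongr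
    _ ≤ 1 := by rw [← div_eq_mul_inv, div_le_one (exp_pos 1)]; exact he

theorem exp_neg_mul_sub_exp_neg_mul_le (a b t : ℝ) :
    exp (-t * a) - exp (-t * b) ≤ t * (b - a) * exp (-t * a) := by
  have hfactor : exp (-t * b) = exp (-t * a) * exp (-(t * (b - a))) := by
    rw [← exp_add]; ring_nf
  rw [hfactor]
  nlinarith [one_sub_le_exp_neg (t * (b - a)), exp_pos (-t * a)]

theorem abs_exp_sub_exp_div_sub_exp_le {a μ ν q s t : ℝ} (ha : 0 ≤ a) (ht : 0 ≤ t)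
    (hq : 0 < q) (hq1 : q ≤ 1) (hgap : 1 - q ≤ s) (hμ : a ≤ μ) (hμ' : μ ≤ a + s * a) :
    |(exp (-t * μ) - exp (-t * ν)) / q - exp (-t * a)|
      ≤ (exp (-t * ν) + 2 * s * exp (-t * a / 2)) / q := by
  have hs : 0 ≤ s := by linarith
  have hhalf : exp (-t * a) ≤ exp (-t * a / 2) := exp_le_exp.mpr (by nlinarith)
  have hslow_le : exp (-t * μ) ≤ exp (-t * a) := exp_le_exp.mpr (by nlinarith)
  have hslow : exp (-t * a) - exp (-t * μ) ≤ s * exp (-t * a / 2) :=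
    calc exp (-t * a) - exp (-t * μ) ≤ t * (μ - a) * exp (-t * a) :=
          exp_neg_mul_sub_exp_neg_mul_le a μ t
      _ ≤ s * (t * a * exp (-(t * a))) := by
          rw [neg_mul]
          have : t * (μ - a) ≤ s * (t * a) := by nlinarith
          nlinarith [exp_pos (-(t * a))]
      _ ≤ s * exp (-t * a / 2) := by
          rw [neg_mul]
          exact mul_le_mul_of_nonneg_left (mul_exp_neg_le_exp_neg_half _) hs
  have hdefect : exp (-t * a) * (1 - q) ≤ s * exp (-t * a / 2) := by
    nlinarith [exp_pos (-t * a)]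
  rw [div_sub' hq.ne', abs_div, abs_of_pos hq]
  gcongr
  rw [abs_le]
  constructor <;> nlinarith [exp_pos (-t * ν), exp_pos (-t * a)]

theorem sq_two_mul_mul_le_rpow {θ ε r : ℝ} (hθ : 0 < θ) (hε : ε ∈ Set.Ioc (0 : ℝ) 1)
    (hr : 1 ≤ r) (hεr : 2 * ε * r ≤ ε ^ θ) :
    (2 * ε * r) ^ 2 ≤ ε ^ (2 * θ) ∧ ε ^ (2 * θ) ≤ (1 / 2) ^ (2 * θ) := by
  obtain ⟨hε0, hε1⟩ := hε
  have hε_half : ε ≤ 1 / 2 := by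
    nlinarith [rpow_le_one hε0.le hε1 hθ.le]
  refine ⟨?_, rpow_le_rpow hε0.le hε_half (by positivity)⟩
  rw [mul_comm 2 θ, rpow_mul hε0.le, rpow_two]
  exact pow_le_pow_left₀ (by positivity) hεr 2

/-- For every `θ ∈ (0,1/2]` there is `C > 0` such that for `ε ∈ (0,1]`, `t ≥ 0`, `r ≥ 1`
with `2εr ≤ ε^θ`, one has
`|ε^{−2}D_ε(r,t) − e^{−tr²}| ≤ C (e^{−t/(2ε²)} + ε^{2θ} e^{−tr²/2})`. -/
theorem dampedWave_symbol_heat_convergence (θ : ℝ) (hθ : θ ∈ Set.Ioc (0:ℝ) (1/2)) :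
    ∃ C : ℝ, 0 < C ∧ ∀ ε t r : ℝ, ε ∈ Set.Ioc (0:ℝ) 1 → 0 ≤ t → 1 ≤ r →
      2 * ε * r ≤ ε ^ θ →
      |D ε r t / ε ^ 2 - Real.exp (-t * r ^ 2)|
        ≤ C * (Real.exp (-t / (2 * ε ^ 2)) + ε ^ (2 * θ) * Real.exp (-t * r ^ 2 / 2)) := by
  set σ : ℝ := (1 / 2) ^ (2 * θ)
  have hσ : σ < 1 := rpow_lt_one (by norm_num) (by norm_num) (by linarith [hθ.1])
  have hq₀ : 0 < √(1 - σ) := sqrt_pos.mpr (by linarith)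
  refine ⟨2 / √(1 - σ), by positivity, fun ε t r hε ht hr hεr => ?_⟩
  obtain ⟨hs, hεσ⟩ := sq_two_mul_mul_le_rpow hθ.1 hε hr hεr
  set q := √(1 - (2 * ε * r) ^ 2)
  have hq2 : q ^ 2 = 1 - (2 * ε * r) ^ 2 := sq_sqrt (by linarith)
  have hqq₀ : √(1 - σ) ≤ q := sqrt_le_sqrt (by linarith)
  have hq : 0 < q := hq₀.trans_le hqq₀
  obtain ⟨hgap, hμ, hμ'⟩ := slow_decay_rate_bounds hε.1.ne' hq.le hq2
  have hfast : exp (-t * ((1 + q) / (2 * ε ^ 2))) ≤ exp (-t / (2 * ε ^ 2)) := by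
    rw [exp_le_exp, neg_mul, neg_div, neg_le_neg_iff, mul_div_assoc']
    gcongr
    exact le_mul_of_one_le_right ht (by linarith)
  rw [D_div_sq_eq hε.1.ne' hq hq2]
  calc _ ≤ (exp (-t * ((1 + q) / (2 * ε ^ 2))) + 2 * (2 * ε * r) ^ 2 * exp (-t * r ^ 2 / 2)) / q :=
        abs_exp_sub_exp_div_sub_exp_le (sq_nonneg r) ht hq (by nlinarith) hgap hμ hμ'
    _ ≤ (exp (-t / (2 * ε ^ 2)) + 2 * ε ^ (2 * θ) * exp (-t * r ^ 2 / 2)) / √(1 - σ) := by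
        have := rpow_nonneg hε.1.le (2 * θ)
        gcongr
    _ ≤ _ := by
        rw [div_mul_eq_mul_div]
        gcongr
        linarith [exp_pos (-t / (2 * ε ^ 2))]
end

section
/- There is a constant C > 0 such that for all ε > 0, all t ≥ 0 and all r ≥ 1, ∫₀ᵗ (ε^{−2}·D_ε(r,s))² ds ≤ C·r^{−2}. -/
open Real

lemma mul_phi_sq_mul_eq_re_sinh_div {a : ℝ} {ω : ℂ} (hω : ω ^ 2 = a) (hω0 : ω ≠ 0) (s : ℝ) :
    s * phi (s ^ 2 * a) = (Complex.sinh (ω * s) / ω).re := by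
  have hsum : HasSum (fun j : ℕ => ((a ^ j * s ^ (2 * j + 1) / (2 * j + 1).factorial : ℝ) : ℂ))
      (Complex.sinh (ω * s) / ω) := by
    refine (Complex.hasSum_sinh (ω * s)).div_const ω |>.congr_fun fun j => ?_
    rw [mul_pow, pow_succ ω, pow_mul ω, hω]
    push_cast
    field_simp
  rw [← (Complex.hasSum_re hsum).tsum_eq, phi, ← tsum_mul_left]
  congr 1 with j
  simp only [Complex.ofReal_re, mul_pow, ← pow_mul]
  ring

lemma exists_hasDerivAt_mul_phi (a : ℝ) :
    ∃ u' : ℝ → ℝ, u' 0 = 1 ∧ (∀ s, HasDerivAt (fun s => s * phi (s ^ 2 * a)) (u' s) s) ∧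
      ∀ s, HasDerivAt u' (a * (s * phi (s ^ 2 * a))) s := by
  rcases eq_or_ne a 0 with rfl | ha
  · refine ⟨fun _ => 1, rfl, fun s => ?_, fun s => ?_⟩
    · simpa [phi_zero] using hasDerivAt_id' s
    · simpa using hasDerivAt_const s (1 : ℝ)
  obtain ⟨ω, hω⟩ := IsAlgClosed.exists_pow_nat_eq (a : ℂ) two_pos
  have hω0 : ω ≠ 0 := by rintro rfl; exact ha (Complex.ofReal_eq_zero.1 (by simpa using hω.symm))
  refine ⟨fun s => (Complex.cosh (ω * s)).re, by simp, fun s => ?_, fun s => ?_⟩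
  · simp only [mul_phi_sq_mul_eq_re_sinh_div hω hω0]
    have h := (((hasDerivAt_id' (s : ℂ)).const_mul ω).csinh.div_const ω).real_of_complex
    convert h using 2
    field_simp
  · rw [mul_phi_sq_mul_eq_re_sinh_div hω hω0, ← Complex.re_ofReal_mul, ← hω]
    have h := ((hasDerivAt_id' (s : ℂ)).const_mul ω).ccosh.real_of_complex
    convert h using 2
    field_simp

lemma integral_sq_le_of_hasDerivAt_damped {m k : ℝ} (hm : 0 < m) (hk : 0 < k) {x v : ℝ → ℝ}
    (hx : ∀ s, HasDerivAt x (v s) s) (hv : ∀ s, HasDerivAt v ((-v s - k * x s) / m) s)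
    (hx0 : x 0 = 0) (t : ℝ) :
    ∫ s in (0:ℝ)..t, x s ^ 2 ≤ (m * v 0) ^ 2 / (2 * k) := by
  set Φ : ℝ → ℝ := fun s => (m ^ 2 / 2 * v s ^ 2 + m * (x s * v s) + (1 + m * k) / 2 * x s ^ 2) / k
  have hΦ : ∀ s, HasDerivAt (fun s => -Φ s) (x s ^ 2) s := fun s => by
    refine ((((hv s).pow 2).const_mul (m ^ 2 / 2)).add (((hx s).mul (hv s)).const_mul m) |>.add
      (((hx s).pow 2).const_mul ((1 + m * k) / 2)) |>.div_const k).neg.congr_deriv ?_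
    field_simp
    ring
  have hcont : Continuous x := continuous_iff_continuousAt.2 fun s => (hx s).continuousAt
  have hΦt : 0 ≤ Φ t := by
    have : 0 ≤ m ^ 2 / 2 * v t ^ 2 + m * (x t * v t) + (1 + m * k) / 2 * x t ^ 2 := by
      nlinarith [sq_nonneg (m * v t + x t), sq_nonneg (x t), mul_pos hm hk]
    positivity
  have hΦ0 : Φ 0 = (m * v 0) ^ 2 / (2 * k) := by
    simp only [Φ, hx0]
    ring
  rw [intervalIntegral.integral_eq_sub_of_hasDerivAt (fun s _ => hΦ s)
    ((hcont.pow 2).intervalIntegrable 0 t)]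
  linarith

lemma integral_sq_exp_mul_div_le {m k a : ℝ} (hm : 0 < m) (hk : 0 < k)
    (ha : a = 1 / (4 * m ^ 2) - k / m) {u u' : ℝ → ℝ}
    (hu : ∀ s, HasDerivAt u (u' s) s) (hu' : ∀ s, HasDerivAt u' (a * u s) s)
    (hu0 : u 0 = 0) (hu'0 : u' 0 = 1) (t : ℝ) :
    ∫ s in (0:ℝ)..t, (exp (-s / (2 * m)) * u s / m) ^ 2 ≤ 1 / (2 * k) := by
  set x := fun s => exp (-s / (2 * m)) * u s / m
  set v := fun s => exp (-s / (2 * m)) * (u' s - u s / (2 * m)) / m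
  have hE : ∀ s, HasDerivAt (fun s => exp (-s / (2 * m))) (-exp (-s / (2 * m)) / (2 * m)) s :=
    fun s => ((hasDerivAt_neg s).div_const (2 * m)).exp.congr_deriv (by ring)
  have hx : ∀ s, HasDerivAt x (v s) s := fun s =>
    (((hE s).mul (hu s)).div_const m).congr_deriv (by ring)
  have hv : ∀ s, HasDerivAt v ((-v s - k * x s) / m) s := fun s => by
    refine (((hE s).mul ((hu' s).sub ((hu s).div_const (2 * m)))).div_const m).congr_deriv ?_
    simp only [v, x, ha, Pi.sub_apply]
    field_simp
    ring
  have hmv0 : m * v 0 = 1 := by simp [v, hu0, hu'0, hm.ne']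
  simpa [hmv0] using integral_sq_le_of_hasDerivAt_damped hm hk hx hv (by simp [x, hu0]) t

/-- There is `C > 0` such that for all `ε > 0`, `t ≥ 0` and `r ≥ 1`,
`∫₀ᵗ (ε^{−2}D_ε(r,s))² ds ≤ C r^{−2}` (variance bound for the stochastic convolution). -/
theorem dampedWave_variance_bound :
    ∃ C : ℝ, 0 < C ∧ ∀ ε t r : ℝ, 0 < ε → 0 ≤ t → 1 ≤ r →
      (∫ s in (0:ℝ)..t, (D ε r s / ε ^ 2) ^ 2) ≤ C / r ^ 2 := by
  refine ⟨1 / 2, by norm_num, fun ε t r hε _ hr => ?_⟩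
  set a := 1 / (4 * ε ^ 4) - r ^ 2 / ε ^ 2
  obtain ⟨u', hu'0, hu, hu'⟩ := exists_hasDerivAt_mul_phi a
  have h := integral_sq_exp_mul_div_le (m := ε ^ 2) (k := r ^ 2) (by positivity) (by positivity)
    (by ring) hu hu' (by simp) hu'0 t
  simp only [D, mul_assoc]
  convert h using 1
  ring
end

section
/- For every integer ℓ ≥ 1 and every real σ > 0, the family of nonnegative reals ⟨n₁ + ⋯ + n_ℓ⟩^{−2σ} · ∏_{j=1}^ℓ ⟨n_j⟩^{−2}, indexed by tuples (n₁,…,n_ℓ) ∈ (ℤ²)^ℓ, is summable; that is, ∑_{(n₁,…,n_ℓ)∈(ℤ²)^ℓ} ⟨n₁+⋯+n_ℓ⟩^{−2σ} ∏_{j=1}^ℓ ⟨n_j⟩^{−2} < ∞. -/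
/-!
Peeling off the variables one at a time reduces the sum to the convolution estimate
`∑ₙ ⟨n⟩^{-2} ⟨m + n⟩^{-t} ≤ C ⟨m⟩^{-t/2}` for `0 < t ≤ 4`: pointwise, `⟨m⟩ ≤ ⟨n⟩ + ⟨m + n⟩`
lets the larger bracket transfer decay `t / 2` to `⟨m⟩`, leaving a power `-(2 + t / 2)` of the
smaller one, which is summable over `ℤ²`. After `ℓ` steps the remaining weight `⟨m⟩^{-t/2^ℓ}` is
evaluated at `m = 0`.
-/

/-- The Japanese bracket `⟨n⟩ = (1+|n|²)^{1/2}` of a lattice point `n ∈ ℤ²`. -/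
noncomputable def jb (n : ℤ × ℤ) : ℝ :=
  Real.sqrt (1 + ((n.1 : ℝ) ^ 2 + (n.2 : ℝ) ^ 2))

lemma rpow_neg_le_two_rpow_mul_rpow_neg {c x t : ℝ} (hc : 0 < c) (hcx : c ≤ 2 * x) (ht : 0 ≤ t) :
    x ^ (-t) ≤ 2 ^ t * c ^ (-t) := by
  calc x ^ (-t) ≤ (c / 2) ^ (-t) := Real.rpow_le_rpow_of_nonpos (by positivity) (by linarith)
        (by linarith)
    _ = 2 ^ t * c ^ (-t) := by
      rw [Real.div_rpow hc.le zero_le_two, Real.rpow_neg zero_le_two, div_inv_eq_mul, mul_comm]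

/-- Since `c ≤ a + b`, the larger of `a`, `b` is at least `c / 2` and can give up `t / 2` of its
decay to `c`; the rest is bounded by the smaller one. -/
lemma rpow_neg_mul_rpow_neg_le {a b c p t : ℝ} (ha : 0 < a) (hb : 0 < b) (hc : 0 < c)
    (hcab : c ≤ a + b) (ht : 0 ≤ t) (htp : t ≤ 2 * p) :
    a ^ (-p) * b ^ (-t) ≤
      2 ^ (t / 2) * c ^ (-(t / 2)) * (a ^ (-(p + t / 2)) + b ^ (-(p + t / 2))) := by
  have hCpos : 0 ≤ 2 ^ (t / 2) * c ^ (-(t / 2)) := by positivity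
  rcases le_total a b with hab | hba
  · have hb_le_a : b ^ (-(t / 2)) ≤ a ^ (-(t / 2)) :=
      Real.rpow_le_rpow_of_nonpos ha hab (by linarith)
    have hb_le_c : b ^ (-(t / 2)) ≤ 2 ^ (t / 2) * c ^ (-(t / 2)) :=
      rpow_neg_le_two_rpow_mul_rpow_neg hc (by linarith) (by linarith)
    calc a ^ (-p) * b ^ (-t) = a ^ (-p) * (b ^ (-(t / 2)) * b ^ (-(t / 2))) := by
          rw [← Real.rpow_add hb]; ring_nf
      _ ≤ a ^ (-p) * (a ^ (-(t / 2)) * (2 ^ (t / 2) * c ^ (-(t / 2)))) := by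
          gcongr ?_ * ?_
          exact mul_le_mul hb_le_a hb_le_c (by positivity) (by positivity)
      _ = 2 ^ (t / 2) * c ^ (-(t / 2)) * a ^ (-(p + t / 2)) := by
          rw [← mul_assoc, ← Real.rpow_add ha]; ring_nf
      _ ≤ _ := by gcongr; exact le_add_of_nonneg_right (by positivity)
  · have ha_le_c : a ^ (-(t / 2)) ≤ 2 ^ (t / 2) * c ^ (-(t / 2)) :=
      rpow_neg_le_two_rpow_mul_rpow_neg hc (by linarith) (by linarith)
    have ha_le_b : a ^ (-(p - t / 2)) ≤ b ^ (-(p - t / 2)) :=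
      Real.rpow_le_rpow_of_nonpos hb hba (by linarith)
    calc a ^ (-p) * b ^ (-t) = a ^ (-(t / 2)) * a ^ (-(p - t / 2)) * b ^ (-t) := by
          rw [← Real.rpow_add ha]; ring_nf
      _ ≤ 2 ^ (t / 2) * c ^ (-(t / 2)) * b ^ (-(p - t / 2)) * b ^ (-t) := by
          gcongr ?_ * _
          exact mul_le_mul ha_le_c ha_le_b (by positivity) hCpos
      _ = 2 ^ (t / 2) * c ^ (-(t / 2)) * b ^ (-(p + t / 2)) := by
          rw [mul_assoc, ← Real.rpow_add hb]; ring_nf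
      _ ≤ _ := by gcongr; exact le_add_of_nonneg_left (by positivity)

lemma jb_sq (n : ℤ × ℤ) : jb n ^ 2 = 1 + ((n.1 : ℝ) ^ 2 + (n.2 : ℝ) ^ 2) :=
  Real.sq_sqrt (by positivity)

lemma one_le_jb (n : ℤ × ℤ) : 1 ≤ jb n :=
  Real.one_le_sqrt.mpr (by nlinarith)

lemma jb_pos (n : ℤ × ℤ) : 0 < jb n := one_pos.trans_le (one_le_jb n)

lemma jb_rpow_nonneg (n : ℤ × ℤ) (s : ℝ) : 0 ≤ jb n ^ s := Real.rpow_nonneg (jb_pos n).le s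

@[simp] lemma jb_neg (n : ℤ × ℤ) : jb (-n) = jb n := by
  simp [jb]

lemma norm_le_jb (n : ℤ × ℤ) : ‖n‖ ≤ jb n := by
  rw [Prod.norm_def, Int.norm_eq_abs, Int.norm_eq_abs]
  refine max_le ?_ ?_ <;> refine Real.abs_le_sqrt ?_ <;> nlinarith

lemma jb_add_le (a b : ℤ × ℤ) : jb (a + b) ≤ jb a + jb b := by
  have cauchy_schwarz : 1 + ((a.1 : ℝ) * b.1 + a.2 * b.2) ≤ jb a * jb b := by
    rw [jb, jb, ← Real.sqrt_mul (by positivity)]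
    refine (le_abs_self _).trans (Real.abs_le_sqrt ?_)
    nlinarith [sq_nonneg ((a.1 : ℝ) - b.1), sq_nonneg ((a.2 : ℝ) - b.2),
      sq_nonneg ((a.1 : ℝ) * b.2 - a.2 * b.1)]
  rw [jb, Real.sqrt_le_iff]
  refine ⟨add_nonneg (jb_pos a).le (jb_pos b).le, ?_⟩
  simp only [Prod.fst_add, Prod.snd_add, Int.cast_add]
  nlinarith [jb_sq a, jb_sq b]

lemma summable_norm_rpow_neg {s : ℝ} (hs : 2 < s) : Summable fun n : ℤ × ℤ ↦ ‖n‖ ^ (-s) := by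
  have h := EisensteinSeries.summable_one_div_norm_rpow hs
  refine (finTwoArrowEquiv ℤ).summable_iff.mp (h.congr fun x ↦ ?_)
  simp [EisensteinSeries.norm_eq_max_natAbs, Prod.norm_def, Int.norm_eq_abs]

lemma summable_jb_rpow_neg {s : ℝ} (hs : 2 < s) : Summable fun n ↦ jb n ^ (-s) := by
  refine (summable_norm_rpow_neg hs).of_norm_bounded_eventually ?_
  filter_upwards [(Set.finite_singleton (0 : ℤ × ℤ)).compl_mem_cofinite] with n hn
  rw [Real.norm_of_nonneg (jb_rpow_nonneg n _)]
  exact Real.rpow_le_rpow_of_nonpos (norm_pos_iff.mpr hn) (norm_le_jb n) (by linarith)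

open scoped ENNReal

/-- `⟨n⟩^{-s}` in `ℝ≥0∞`, where iterated sums can be exchanged and bounded without summability
side conditions. -/
noncomputable def jbWeight (s : ℝ) (n : ℤ × ℤ) : ℝ≥0∞ := ENNReal.ofReal (jb n ^ (-s))

lemma jbWeight_anti {s t : ℝ} (hst : s ≤ t) (n : ℤ × ℤ) : jbWeight t n ≤ jbWeight s n :=
  ENNReal.ofReal_le_ofReal (Real.rpow_le_rpow_of_exponent_le (one_le_jb n) (by linarith))

lemma tsum_jbWeight_ne_top {s : ℝ} (hs : 2 < s) : ∑' n, jbWeight s n ≠ ∞ :=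
  (summable_jb_rpow_neg hs).tsum_ofReal_ne_top

lemma jbWeight_mul_jbWeight_le {t : ℝ} (ht : 0 ≤ t) (ht4 : t ≤ 4) (m n : ℤ × ℤ) :
    jbWeight 2 n * jbWeight t (m + n) ≤ ENNReal.ofReal (2 ^ (t / 2)) * jbWeight (t / 2) m *
      (jbWeight (2 + t / 2) n + jbWeight (2 + t / 2) (m + n)) := by
  have hm : jb m ≤ jb n + jb (m + n) := by
    simpa [add_comm] using jb_add_le (m + n) (-n)
  have h := rpow_neg_mul_rpow_neg_le (jb_pos n) (jb_pos (m + n)) (jb_pos m) hm ht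
    (by linarith : t ≤ 2 * 2)
  calc jbWeight 2 n * jbWeight t (m + n)
      = ENNReal.ofReal (jb n ^ (-2 : ℝ) * jb (m + n) ^ (-t)) :=
        (ENNReal.ofReal_mul (jb_rpow_nonneg _ _)).symm
    _ ≤ ENNReal.ofReal (2 ^ (t / 2) * jb m ^ (-(t / 2)) *
          (jb n ^ (-(2 + t / 2)) + jb (m + n) ^ (-(2 + t / 2)))) := ENNReal.ofReal_le_ofReal h
    _ = _ := by
        rw [ENNReal.ofReal_mul (mul_nonneg (by positivity) (jb_rpow_nonneg _ _)),
          ENNReal.ofReal_mul (by positivity),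
          ENNReal.ofReal_add (jb_rpow_nonneg _ _) (jb_rpow_nonneg _ _)]
        rfl

lemma exists_tsum_jbWeight_mul_le {t : ℝ} (ht : 0 < t) (ht4 : t ≤ 4) :
    ∃ C ≠ ∞, ∀ m, ∑' n, jbWeight 2 n * jbWeight t (m + n) ≤ C * jbWeight (t / 2) m := by
  set S := ∑' n, jbWeight (2 + t / 2) n
  have hS : S ≠ ∞ := tsum_jbWeight_ne_top (by linarith)
  refine ⟨ENNReal.ofReal (2 ^ (t / 2)) * (S + S), by finiteness, fun m ↦ ?_⟩
  have htranslate : ∑' n, jbWeight (2 + t / 2) (m + n) = S :=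
    (Equiv.addLeft m).tsum_eq (jbWeight (2 + t / 2))
  calc ∑' n, jbWeight 2 n * jbWeight t (m + n)
      ≤ ∑' n, ENNReal.ofReal (2 ^ (t / 2)) * jbWeight (t / 2) m *
          (jbWeight (2 + t / 2) n + jbWeight (2 + t / 2) (m + n)) :=
        ENNReal.tsum_le_tsum (jbWeight_mul_jbWeight_le ht.le ht4 m)
    _ = ENNReal.ofReal (2 ^ (t / 2)) * (S + S) * jbWeight (t / 2) m := by
        rw [ENNReal.tsum_mul_left, ENNReal.tsum_add, htranslate]; ring

lemma exists_tsum_prod_jbWeight_mul_le (k : ℕ) {t : ℝ} (ht : 0 < t) (ht4 : t ≤ 4) :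
    ∃ C ≠ ∞, ∀ m, ∑' n : Fin k → ℤ × ℤ,
      (∏ j, jbWeight 2 (n j)) * jbWeight t (m + ∑ j, n j) ≤ C * jbWeight (t / 2 ^ k) m := by
  induction k generalizing t with
  | zero => exact ⟨1, ENNReal.one_ne_top, fun m ↦ by simp⟩
  | succ k ih =>
    obtain ⟨C, hC, hC_bound⟩ := ih ht ht4
    have hs : 0 < t / 2 ^ k := by positivity
    have hs4 : t / 2 ^ k ≤ 4 := (div_le_self ht.le (one_le_pow₀ one_le_two)).trans ht4
    obtain ⟨D, hD, hD_bound⟩ := exists_tsum_jbWeight_mul_le hs hs4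
    refine ⟨C * D, ENNReal.mul_ne_top hC hD, fun m ↦ ?_⟩
    rw [← (Fin.consEquiv fun _ ↦ ℤ × ℤ).tsum_eq, ENNReal.tsum_prod']
    simp only [Fin.consEquiv_apply, Fin.prod_univ_succ, Fin.sum_univ_succ, Fin.cons_zero,
      Fin.cons_succ, ← add_assoc, mul_assoc, ENNReal.tsum_mul_left]
    calc ∑' a, jbWeight 2 a * ∑' b : Fin k → ℤ × ℤ,
          (∏ j, jbWeight 2 (b j)) * jbWeight t (m + a + ∑ j, b j)
        ≤ ∑' a, jbWeight 2 a * (C * jbWeight (t / 2 ^ k) (m + a)) := by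
          gcongr with a; exact hC_bound (m + a)
      _ = C * ∑' a, jbWeight 2 a * jbWeight (t / 2 ^ k) (m + a) := by
          rw [← ENNReal.tsum_mul_left]; congr 1; ext a; ring
      _ ≤ C * (D * jbWeight (t / 2 ^ k / 2) m) := by gcongr; exact hD_bound m
      _ = C * (D * jbWeight (t / 2 ^ (k + 1)) m) := by rw [pow_succ, div_div]

theorem lattice_convolution_summable_general (ℓ : ℕ) (σ : ℝ) (hσ : 0 < σ) :
    Summable (fun n : Fin ℓ → ℤ × ℤ =>
      jb (∑ j, n j) ^ (-(2 * σ)) * ∏ j, jb (n j) ^ (-(2:ℝ))) := by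
  obtain ⟨C, hC, hC_bound⟩ := exists_tsum_prod_jbWeight_mul_le ℓ (t := min (2 * σ) 4)
    (lt_min (by positivity) four_pos) (min_le_right _ _)
  have hnonneg (n : Fin ℓ → ℤ × ℤ) :
      0 ≤ jb (∑ j, n j) ^ (-(2 * σ)) * ∏ j, jb (n j) ^ (-(2:ℝ)) :=
    mul_nonneg (jb_rpow_nonneg _ _) (Finset.prod_nonneg fun j _ ↦ jb_rpow_nonneg _ _)
  have summand_le (n : Fin ℓ → ℤ × ℤ) :
      ENNReal.ofReal (jb (∑ j, n j) ^ (-(2 * σ)) * ∏ j, jb (n j) ^ (-(2:ℝ))) ≤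
        (∏ j, jbWeight 2 (n j)) * jbWeight (min (2 * σ) 4) (0 + ∑ j, n j) := by
    rw [ENNReal.ofReal_mul (jb_rpow_nonneg _ _),
      ENNReal.ofReal_prod_of_nonneg (fun j _ ↦ jb_rpow_nonneg _ _), mul_comm, zero_add]
    exact mul_le_mul_right (jbWeight_anti (min_le_left _ _) _) _
  have tsum_ne_top := ne_top_of_le_ne_top (ENNReal.mul_ne_top hC ENNReal.ofReal_ne_top)
    ((ENNReal.tsum_le_tsum summand_le).trans (hC_bound 0))
  exact (ENNReal.summable_toReal tsum_ne_top).congr fun n ↦ ENNReal.toReal_ofReal (hnonneg n)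

/-- For every integer `ℓ ≥ 1` and every `σ > 0`, the lattice sum
`∑_{(n₁,…,n_ℓ)∈(ℤ²)^ℓ} ⟨n₁+⋯+n_ℓ⟩^{−2σ} ∏_j ⟨n_j⟩^{−2}` converges. -/
theorem lattice_convolution_summable (ℓ : ℕ) (hℓ : 1 ≤ ℓ) (σ : ℝ) (hσ : 0 < σ) :
    Summable (fun n : Fin ℓ → ℤ × ℤ =>
      jb (∑ j, n j) ^ (-(2 * σ)) * ∏ j, jb (n j) ^ (-(2:ℝ))) :=
  lattice_convolution_summable_general ℓ σ hσ
end
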